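/- For every invitation set I ⊆ V, the acceptance probability admits the explicit formula f(I) = Σ_{g∈𝒢} Pr[g]·f(g,I), where 𝒢 is the set of all realizations and f(g,I) = 1 if t(g) ⊆ I and f(g,I) = 0 otherwise. -/

import Mathlib

open Finset MeasureTheory

/-- A social network with weights, an initiator `s`, and a target user `t ∉ N_s`. -/
structure FriendNet (V : Type) [Fintype V] [DecidableEq V] where
  G : SimpleGraph V
  adjDec : DecidableRel G.Adj
  w : V → V → ℝ
  w_pos : ∀ u v : V, G.Adj u v → 0 < w u v
  w_le_one : ∀ u v : V, G.Adj u v → w u v ≤ 1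
  w_eq_zero : ∀ u v : V, ¬ G.Adj u v → w u v = 0
  w_sum_le_one : ∀ v : V, ∑ u : V, w u v ≤ 1
  s : V
  t : V
  t_ne_s : t ≠ s
  t_not_friend : ¬ G.Adj s t

variable {V : Type} [Fintype V] [DecidableEq V]

namespace FriendNet

/-- The current friends (neighbors) `N_v` of a user `v`. -/
def Nbr (net : FriendNet V) (v : V) : Finset V :=
  letI := net.adjDec
  Finset.univ.filter fun u => net.G.Adj u v

/-- `Φ(C)`: users not in `C` willing to accept an invitation, given thresholds `θ`. -/
noncomputable def Phi (net : FriendNet V) (θ : V → ℝ) (C : Finset V) : Finset V :=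
  Finset.univ.filter fun u => u ∉ C ∧ θ u ≤ ∑ v ∈ C, net.w v u

/-- One round of the friending process: `C ∪ (Φ(C) ∩ I)`. -/
noncomputable def Cstep (net : FriendNet V) (θ : V → ℝ) (I : Finset V) (C : Finset V) : Finset V :=
  C ∪ (net.Phi θ C ∩ I)

/-- `C_∞(I)`: the final set of the threshold friending process (it stabilizes after
`|V|` rounds). -/
noncomputable def Cinf (net : FriendNet V) (θ : V → ℝ) (I : Finset V) : Finset V :=
  (net.Cstep θ I)^[Fintype.card V] (net.Nbr net.s)

/-- The distribution of the thresholds: i.i.d. uniform on `[0,1]`. -/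
noncomputable def thetaMeasure (V : Type) [Fintype V] : Measure (V → ℝ) :=
  Measure.pi fun _ => volume.restrict (Set.Icc (0 : ℝ) 1)

/-- The acceptance probability `f(I)`: probability over the thresholds that `t ∈ C_∞(I)`. -/
noncomputable def f (net : FriendNet V) (I : Finset V) : ℝ :=
  (thetaMeasure V {θ : V → ℝ | net.t ∈ net.Cinf θ I}).toReal

/-- `p_max`: the maximum acceptance probability over all invitation sets. -/
noncomputable def pmax (net : FriendNet V) : ℝ := ⨆ I : Finset V, net.f I

/-- A realization: each user selects at most one current friend (`none` plays ℵ0). -/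
def IsRealization (net : FriendNet V) (g : V → Option V) : Prop :=
  ∀ v u : V, g v = some u → net.G.Adj u v

/-- `Pr[g]`, the probability of generating the realization `g`. -/
noncomputable def realWeight (net : FriendNet V) (g : V → Option V) : ℝ :=
  ∏ v : V, (g v).elim (1 - ∑ u : V, net.w u v) (fun u => net.w u v)

/-- `Ψ(H)` for a realization `g`. -/
def Psi (g : V → Option V) (H : Finset V) : Finset V :=
  Finset.univ.filter fun v => v ∉ H ∧ ∃ u ∈ H, g v = some u

/-- One round of Process 2: `H ∪ (Ψ(H) ∩ I)`. -/
def Hstep (g : V → Option V) (I : Finset V) (H : Finset V) : Finset V :=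
  H ∪ (Psi g H ∩ I)

/-- `H_∞(g, I)`: the final set of Process 2 (it stabilizes after `|V|` rounds). -/
def Hinf (net : FriendNet V) (g : V → Option V) (I : Finset V) : Finset V :=
  (Hstep g I)^[Fintype.card V] (net.Nbr net.s)

end FriendNet

/-- The loop of Algorithm 1 (backward trace), with fuel. `none` plays ℵ0. -/
def traceAux (g : V → Option V) (Ns : Finset V) : ℕ → V → Finset (Option V) → Finset (Option V)
  | 0, _, acc => acc
  | m + 1, u, acc =>
    match g u with
    | none => insert none acc
    | some v =>
      if some v ∈ acc then insert none acc
      else if v ∈ Ns then acc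
      else traceAux g Ns m v (insert (some v) acc)

namespace FriendNet

/-- The backward trace `t(g)` computed by Algorithm 1. -/
def trace (net : FriendNet V) (g : V → Option V) : Finset (Option V) :=
  traceAux g (net.Nbr net.s) (Fintype.card V + 1) net.t {some net.t}

/-- `f(g, I)`: the indicator that `I` covers `g`, i.e. `t(g) ⊆ I`. -/
noncomputable def fg (net : FriendNet V) (g : V → Option V) (I : Finset V) : ℝ :=
  if net.trace g ⊆ I.image some then 1 else 0

/-- `F(B_l, I) = Σ_{g ∈ B_l} f(g, I)`. -/
noncomputable def F (net : FriendNet V) {l : ℕ} (B : Fin l → V → Option V)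
    (I : Finset V) : ℝ :=
  ∑ i : Fin l, net.fg (B i) I

end FriendNet

instance : MeasurableSpace (V → Option V) := ⊤

/-- The distribution of a random realization `ĝ`. -/
noncomputable def FriendNet.realMeasure (net : FriendNet V) : Measure (V → Option V) :=
  ∑ g : V → Option V, ENNReal.ofReal (net.realWeight g) • Measure.dirac g

open Classical in
/-- `V_max`: users outside `{s} ∪ N_s` lying on some path from `{s} ∪ N_s` to `t`. -/
noncomputable def FriendNet.Vmax (net : FriendNet V) : Finset V :=
  Finset.univ.filter fun u =>
    u ∉ insert net.s (net.Nbr net.s) ∧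
      ∃ v ∈ insert net.s (net.Nbr net.s),
        ∃ p : net.G.Walk v net.t, p.IsPath ∧ u ∈ p.support


/-!
Both the threshold process and Process 2 are instances of one spreading process: an invited user
`u` joins the current set `C` once its private randomness `ω u` hits `C`, namely
`θ u ≤ ∑ v ∈ C, w v u` for thresholds and `g u ∈ C` for realizations. In both models the hit
event has probability `∑ v ∈ C, w v u` and grows with `C`. The event that the process runs
through a given chain `A₀ ⊆ ⋯ ⊆ A_K` is a product over users of conditions on which of the nested
hit events `{ω u hits A_j}` occur, and the law of that pattern depends only on the probabilities
of the nested events. Hence every run, and so the event `t ∈ C_∞(I)`, has the same probability in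
both models. Finally `t(g) ⊆ I` exactly when Process 2 reaches `t`, since along a successful
backward trace the rounds in which the users entered decrease strictly.
-/

section MonotoneSeq

variable {Ω Ω' ι : Type*} [MeasurableSpace Ω] [MeasurableSpace Ω']

theorem measurableSet_setOf_mem_seq [Finite ι] {E : ι → Set Ω}
    (hE : ∀ j, MeasurableSet (E j)) (Q : (ι → Prop) → Prop) :
    MeasurableSet {x | Q fun j => x ∈ E j} :=
  (Set.to_countable {s : ι → Prop | Q s}).measurableSet.preimage
    (measurable_pi_lambda _ fun j => measurable_mem.2 (hE j))

open Classical in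
theorem measure_setOf_mem_monotone_eq_add {K : ℕ} (μ : Measure Ω) {E : Fin (K + 1) → Set Ω}
    (hE : Monotone E) (hE0 : MeasurableSet (E 0)) (Q : (Fin (K + 1) → Prop) → Prop) :
    μ {x | Q fun j => x ∈ E j} = (if Q fun _ => True then μ (E 0) else 0) +
      μ.restrict (E 0)ᶜ {x | Q (Fin.cons False fun j => x ∈ E j.succ)} := by
  rw [← measure_inter_add_sdiff _ hE0, Measure.restrict_apply' hE0.compl]
  congr 1
  · have hall : ∀ x ∈ E 0, (fun j => x ∈ E j) = fun _ => True :=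
      fun x hx => funext fun j => eq_true (hE (Fin.zero_le j) hx)
    split_ifs with hQ
    · exact congrArg μ (Set.inter_eq_right.2 fun x hx => by simp [hall x hx, hQ])
    · rw [← measure_empty (μ := μ)]
      exact congrArg μ (Set.eq_empty_of_forall_notMem fun x ⟨hx, hx0⟩ =>
        hQ (by simpa [hall x hx0] using hx))
  · congr 1
    ext x
    simp only [Set.mem_inter_iff, Set.mem_sdiff, Set.mem_ofPred_eq, Set.mem_compl_iff]
    refine and_congr_left fun hx => ?_
    rw [← Fin.cons_self_tail fun j => x ∈ E j, eq_false hx]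
    rfl

theorem measure_setOf_mem_monotone_eq : ∀ {K : ℕ} (μ : Measure Ω) (ν : Measure Ω')
    [IsFiniteMeasure μ] [IsFiniteMeasure ν] {E : Fin K → Set Ω} {F : Fin K → Set Ω'},
    Monotone E → Monotone F → (∀ j, MeasurableSet (E j)) → (∀ j, MeasurableSet (F j)) →
    μ Set.univ = ν Set.univ → (∀ j, μ (E j) = ν (F j)) → ∀ Q : (Fin K → Prop) → Prop,
    μ {x | Q fun j => x ∈ E j} = ν {y | Q fun j => y ∈ F j}
  | 0, μ, ν, _, _, E, F, _, _, _, _, huniv, _, Q => by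
    simp only [show ∀ x, (fun j : Fin 0 => x ∈ E j) = Fin.elim0 from fun x => funext (·.elim0),
      show ∀ y, (fun j : Fin 0 => y ∈ F j) = Fin.elim0 from fun y => funext (·.elim0)]
    by_cases hQ : Q Fin.elim0 <;> simp [hQ, huniv]
  | K + 1, μ, ν, _, _, E, F, hE, hF, hEm, hFm, huniv, hEF, Q => by
    rw [measure_setOf_mem_monotone_eq_add μ hE (hEm 0),
      measure_setOf_mem_monotone_eq_add ν hF (hFm 0), hEF 0]
    congr 1
    have hcompl : μ.restrict (E 0)ᶜ Set.univ = ν.restrict (F 0)ᶜ Set.univ := by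
      rw [Measure.restrict_apply_univ, Measure.restrict_apply_univ,
        measure_compl (hEm 0) (measure_ne_top _ _), measure_compl (hFm 0) (measure_ne_top _ _),
        huniv, hEF]
    have htail : ∀ j : Fin K, μ.restrict (E 0)ᶜ (E j.succ) = ν.restrict (F 0)ᶜ (F j.succ) := by
      intro j
      simp only [Measure.restrict_apply' (hEm 0).compl, Measure.restrict_apply' (hFm 0).compl,
        ← Set.sdiff_eq]
      rw [measure_sdiff (hE (Fin.zero_le _)) (hEm 0).nullMeasurableSet (measure_ne_top _ _),
        measure_sdiff (hF (Fin.zero_le _)) (hFm 0).nullMeasurableSet (measure_ne_top _ _),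
        hEF, hEF]
    exact measure_setOf_mem_monotone_eq (μ.restrict (E 0)ᶜ) (ν.restrict (F 0)ᶜ)
      (fun _ _ h => hE (Fin.succ_le_succ_iff.2 h)) (fun _ _ h => hF (Fin.succ_le_succ_iff.2 h))
      (fun j => hEm j.succ) (fun j => hFm j.succ) hcompl htail fun s => Q (Fin.cons False s)

end MonotoneSeq

section Spread

variable {U Ω Ω' : Type*} {hit : U → Ω → Finset U → Prop} {I : Finset U}

variable (hit I) in
/-- The values of `ω u` under which user `u` joins at exactly the rounds prescribed by `A`. -/
def compatibleSet {K : ℕ} (A : Fin (K + 1) → Finset U) (u : U) : Set Ω :=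
  {x | ∀ j : Fin K, u ∈ A j.succ ↔ u ∈ A j.castSucc ∨ u ∈ I ∧ hit u x (A j.castSucc)}

section Law

variable [MeasurableSpace Ω] [MeasurableSpace Ω'] {hit' : U → Ω' → Finset U → Prop}

variable (hit) in
structure IsSpreadRule : Prop where
  monotone : ∀ u x, Monotone (hit u x)
  measurableSet : ∀ u C, MeasurableSet {x | hit u x C}

theorem IsSpreadRule.measurableSet_compatibleSet (h : IsSpreadRule hit) {K : ℕ}
    (A : Fin (K + 1) → Finset U) (u : U) : MeasurableSet (compatibleSet hit I A u) :=
  measurableSet_setOf_mem_seq (E := fun j : Fin K => {x | hit u x (A j.castSucc)})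
    (fun _ => h.measurableSet u _)
    fun s => ∀ j : Fin K, u ∈ A j.succ ↔ u ∈ A j.castSucc ∨ u ∈ I ∧ s j

theorem IsSpreadRule.measure_compatibleSet_eq (h : IsSpreadRule hit) (h' : IsSpreadRule hit')
    {u : U} (μ : Measure Ω) (ν : Measure Ω') [IsProbabilityMeasure μ] [IsProbabilityMeasure ν]
    (hlaw : ∀ C, μ {x | hit u x C} = ν {y | hit' u y C}) {K : ℕ} {A : Fin (K + 1) → Finset U}
    (hA : Monotone A) : μ (compatibleSet hit I A u) = ν (compatibleSet hit' I A u) :=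
  measure_setOf_mem_monotone_eq μ ν (E := fun j => {x | hit u x (A j.castSucc)})
    (F := fun j => {y | hit' u y (A j.castSucc)})
    (fun _ _ hij x => h.monotone u x (hA (Fin.castSucc_le_castSucc_iff.2 hij)))
    (fun _ _ hij y => h'.monotone u y (hA (Fin.castSucc_le_castSucc_iff.2 hij)))
    (fun _ => h.measurableSet u _) (fun _ => h'.measurableSet u _) (by simp) (fun _ => hlaw _)
    fun s => ∀ j : Fin K, u ∈ A j.succ ↔ u ∈ A j.castSucc ∨ u ∈ I ∧ s j

end Law

variable [DecidableEq U]

variable (hit I) in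
open Classical in
noncomputable def spreadStep (ω : U → Ω) (C : Finset U) : Finset U :=
  C ∪ I.filter fun u => hit u (ω u) C

theorem mem_spreadStep {ω : U → Ω} {C : Finset U} {u : U} :
    u ∈ spreadStep hit I ω C ↔ u ∈ C ∨ u ∈ I ∧ hit u (ω u) C := by
  simp [spreadStep]

theorem monotone_iterate_spreadStep (ω : U → Ω) (N : Finset U) :
    Monotone fun n => (spreadStep hit I ω)^[n] N :=
  monotone_nat_of_le_succ fun n => by
    rw [Function.iterate_succ_apply']
    exact Finset.subset_union_left

variable (hit I) in
noncomputable def spreadPath (K : ℕ) (N : Finset U) (ω : U → Ω) : Fin (K + 1) → Finset U :=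
  fun j => (spreadStep hit I ω)^[j] N

theorem monotone_spreadPath (K : ℕ) (N : Finset U) (ω : U → Ω) :
    Monotone (spreadPath hit I K N ω) :=
  fun _ _ h => monotone_iterate_spreadStep ω N h

theorem spreadPath_eq_iff {K : ℕ} {N : Finset U} {ω : U → Ω} {A : Fin (K + 1) → Finset U} :
    spreadPath hit I K N ω = A ↔
      A 0 = N ∧ ∀ j : Fin K, A j.succ = spreadStep hit I ω (A j.castSucc) := by
  constructor
  · rintro rfl
    exact ⟨rfl, fun j => by simp [spreadPath, Function.iterate_succ_apply']⟩
  · rintro ⟨h0, hstep⟩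
    funext j
    induction j using Fin.induction with
    | zero => exact h0.symm
    | succ j ih => simp [spreadPath, Function.iterate_succ_apply', hstep, ← ih]

theorem spreadPath_preimage_singleton {K : ℕ} (N : Finset U) (A : Fin (K + 1) → Finset U) :
    spreadPath hit I K N ⁻¹' {A} =
      if A 0 = N then Set.univ.pi (compatibleSet hit I A) else ∅ := by
  ext ω
  simp only [Set.mem_preimage, Set.mem_singleton_iff, spreadPath_eq_iff]
  split_ifs with h0
  · simp only [h0, true_and, Set.mem_univ_pi, compatibleSet, Set.mem_ofPred_eq, Finset.ext_iff,
      mem_spreadStep]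
    exact forall_comm
  · simp [h0]

theorem spreadPath_preimage_singleton_of_not_monotone {K : ℕ} {N : Finset U}
    {A : Fin (K + 1) → Finset U} (hA : ¬Monotone A) : spreadPath hit I K N ⁻¹' {A} = ∅ :=
  Set.eq_empty_of_forall_notMem fun ω hω => hA (hω ▸ monotone_spreadPath K N ω)

variable [Fintype U]

open Classical in
theorem setOf_iterate_spreadStep_eq_preimage (K : ℕ) (N : Finset U) (P : Finset U → Prop) :
    {ω | P ((spreadStep hit I ω)^[K] N)} =
      spreadPath hit I K N ⁻¹' ↑(Finset.univ.filter fun A : Fin (K + 1) → Finset U =>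
        P (A (Fin.last K))) := by
  ext ω
  simp [spreadPath]

variable [MeasurableSpace Ω] [MeasurableSpace Ω'] {hit' : U → Ω' → Finset U → Prop}

theorem IsSpreadRule.measurableSet_spreadPath_preimage (h : IsSpreadRule hit) {K : ℕ}
    (N : Finset U) (A : Fin (K + 1) → Finset U) :
    MeasurableSet (spreadPath hit I K N ⁻¹' {A}) := by
  rw [spreadPath_preimage_singleton]
  split_ifs
  · exact MeasurableSet.univ_pi fun u => h.measurableSet_compatibleSet A u
  · exact MeasurableSet.empty

theorem IsSpreadRule.measure_spreadPath_preimage_eq (h : IsSpreadRule hit)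
    (h' : IsSpreadRule hit') (μ : U → Measure Ω) (ν : U → Measure Ω')
    [∀ u, IsProbabilityMeasure (μ u)] [∀ u, IsProbabilityMeasure (ν u)]
    (hlaw : ∀ u C, μ u {x | hit u x C} = ν u {y | hit' u y C}) {K : ℕ} (N : Finset U)
    (A : Fin (K + 1) → Finset U) :
    Measure.pi μ (spreadPath hit I K N ⁻¹' {A}) =
      Measure.pi ν (spreadPath hit' I K N ⁻¹' {A}) := by
  by_cases hA : Monotone A
  · rw [spreadPath_preimage_singleton, spreadPath_preimage_singleton]
    split_ifs
    · rw [Measure.pi_pi, Measure.pi_pi]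
      exact Finset.prod_congr rfl fun u _ => h.measure_compatibleSet_eq h' _ _ (hlaw u) hA
    · simp
  · rw [spreadPath_preimage_singleton_of_not_monotone hA,
      spreadPath_preimage_singleton_of_not_monotone hA, measure_empty, measure_empty]

theorem IsSpreadRule.measure_iterate_spreadStep_eq (h : IsSpreadRule hit)
    (h' : IsSpreadRule hit') (μ : U → Measure Ω) (ν : U → Measure Ω')
    [∀ u, IsProbabilityMeasure (μ u)] [∀ u, IsProbabilityMeasure (ν u)]
    (hlaw : ∀ u C, μ u {x | hit u x C} = ν u {y | hit' u y C}) (K : ℕ) (N : Finset U)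
    (P : Finset U → Prop) :
    Measure.pi μ {ω | P ((spreadStep hit I ω)^[K] N)} =
      Measure.pi ν {ω | P ((spreadStep hit' I ω)^[K] N)} := by
  rw [setOf_iterate_spreadStep_eq_preimage, setOf_iterate_spreadStep_eq_preimage,
    ← sum_measure_preimage_singleton _ fun A _ => h.measurableSet_spreadPath_preimage N A,
    ← sum_measure_preimage_singleton _ fun A _ => h'.measurableSet_spreadPath_preimage N A]
  exact Finset.sum_congr rfl fun A _ => h.measure_spreadPath_preimage_eq h' μ ν hlaw N A

end Spread

instance {α : Type*} : MeasurableSpace (Option α) := ⊤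

theorem volume_restrict_Icc_setOf_le {a : ℝ} (ha : a ≤ 1) :
    volume.restrict (Set.Icc (0 : ℝ) 1) {x | x ≤ a} = ENNReal.ofReal a := by
  have hIcc : {x | x ≤ a} ∩ Set.Icc 0 1 = Set.Icc 0 a :=
    Set.ext fun x => ⟨fun ⟨h, h0, _⟩ => ⟨h0, h⟩, fun ⟨h0, h⟩ => ⟨h, h0, h.trans ha⟩⟩
  rw [Measure.restrict_apply (t := {x | x ≤ a}) measurableSet_Iic, hIcc, Real.volume_Icc,
    sub_zero]

instance : IsProbabilityMeasure (volume.restrict (Set.Icc (0 : ℝ) 1)) :=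
  ⟨by simp [Real.volume_Icc]⟩

namespace FriendNet

def choiceRule {α : Type} (_ : α) (o : Option α) (C : Finset α) : Prop := ∃ v ∈ C, o = some v

theorem isSpreadRule_choiceRule {α : Type} : IsSpreadRule (choiceRule (α := α)) where
  monotone _ _ _ _ hCD := fun ⟨v, hv, ho⟩ => ⟨v, hCD hv, ho⟩
  measurableSet _ _ := trivial

theorem Hstep_eq_spreadStep (g : V → Option V) (I : Finset V) :
    Hstep g I = spreadStep choiceRule I g := by
  ext H u
  simp only [Hstep, Psi, mem_spreadStep, choiceRule, Finset.mem_union, Finset.mem_inter,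
    Finset.mem_filter, Finset.mem_univ, true_and]
  tauto

theorem mem_Hstep {g : V → Option V} {I H : Finset V} {u : V} :
    u ∈ Hstep g I H ↔ u ∈ H ∨ u ∈ I ∧ ∃ v ∈ H, g u = some v := by
  rw [Hstep_eq_spreadStep, mem_spreadStep]
  rfl

theorem monotone_iterate_Hstep (g : V → Option V) (I H : Finset V) :
    Monotone fun n => (Hstep g I)^[n] H := by
  rw [Hstep_eq_spreadStep]
  exact monotone_iterate_spreadStep g H

theorem exists_of_mem_iterate_Hstep_succ {g : V → Option V} {I Ns : Finset V} {n : ℕ} {u : V}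
    (hu : u ∈ (Hstep g I)^[n + 1] Ns) (hun : u ∉ (Hstep g I)^[n] Ns) :
    u ∈ I ∧ ∃ v ∈ (Hstep g I)^[n] Ns, g u = some v := by
  rw [Function.iterate_succ_apply', mem_Hstep] at hu
  exact hu.resolve_left hun

theorem mem_iterate_Hstep_succ {g : V → Option V} {I Ns : Finset V} {n : ℕ} {u v : V}
    (hu : u ∈ I) (hv : v ∈ (Hstep g I)^[n] Ns) (hgu : g u = some v) :
    u ∈ (Hstep g I)^[n + 1] Ns := by
  rw [Function.iterate_succ_apply', mem_Hstep]
  exact Or.inr ⟨hu, v, hv, hgu⟩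

variable (net : FriendNet V)

theorem w_nonneg (u v : V) : 0 ≤ net.w u v := by
  by_cases h : net.G.Adj u v
  · exact (net.w_pos u v h).le
  · exact (net.w_eq_zero u v h).ge

theorem sum_w_le_one (C : Finset V) (v : V) : ∑ u ∈ C, net.w u v ≤ 1 :=
  (Finset.sum_le_sum_of_subset_of_nonneg C.subset_univ fun u _ _ => net.w_nonneg u v).trans
    (net.w_sum_le_one v)

def thresholdRule (u : V) (x : ℝ) (C : Finset V) : Prop := x ≤ ∑ v ∈ C, net.w v u

theorem isSpreadRule_thresholdRule : IsSpreadRule net.thresholdRule where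
  monotone u _ _ _ hCD hx :=
    hx.trans (Finset.sum_le_sum_of_subset_of_nonneg hCD fun v _ _ => net.w_nonneg v u)
  measurableSet _ _ := measurableSet_Iic

theorem Cstep_eq_spreadStep (θ : V → ℝ) (I : Finset V) :
    net.Cstep θ I = spreadStep net.thresholdRule I θ := by
  ext C u
  simp only [Cstep, Phi, mem_spreadStep, thresholdRule, Finset.mem_union, Finset.mem_inter,
    Finset.mem_filter, Finset.mem_univ, true_and]
  tauto

/-- `Pr[g(v) = o]`; `realWeight` is the product of these. -/
noncomputable def selectProb (v : V) (o : Option V) : ℝ :=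
  o.elim (1 - ∑ u, net.w u v) fun u => net.w u v

theorem selectProb_nonneg (v : V) (o : Option V) : 0 ≤ net.selectProb v o := by
  cases o with
  | none => exact sub_nonneg.2 (net.w_sum_le_one v)
  | some u => exact net.w_nonneg u v

noncomputable def selectMeasure (v : V) : Measure (Option V) :=
  ∑ o, ENNReal.ofReal (net.selectProb v o) • Measure.dirac o

theorem selectMeasure_apply (v : V) (S : Set (Option V)) :
    net.selectMeasure v S =
      ∑ o, S.indicator (fun o => ENNReal.ofReal (net.selectProb v o)) o := by
  simp only [selectMeasure, Measure.coe_finsetSum, Finset.sum_apply, Measure.smul_apply,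
    Measure.dirac_apply, smul_eq_mul]
  refine Finset.sum_congr rfl fun o _ => ?_
  by_cases h : o ∈ S <;> simp [h]

theorem selectMeasure_singleton (v : V) (o : Option V) :
    net.selectMeasure v {o} = ENNReal.ofReal (net.selectProb v o) := by
  simp [selectMeasure_apply, Set.indicator_singleton]

theorem selectMeasure_choiceRule (v : V) (C : Finset V) :
    net.selectMeasure v {o | choiceRule v o C} = ENNReal.ofReal (∑ u ∈ C, net.w u v) := by
  rw [selectMeasure_apply, Fintype.sum_option,
    ENNReal.ofReal_sum_of_nonneg fun u _ => net.w_nonneg u v]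
  simp [choiceRule, selectProb, Set.indicator, Finset.sum_ite_mem]

instance (v : V) : IsProbabilityMeasure (net.selectMeasure v) :=
  ⟨by
    rw [selectMeasure_apply, Fintype.sum_option]
    simp only [Set.indicator_univ, selectProb, Option.elim]
    rw [← ENNReal.ofReal_sum_of_nonneg fun u _ => net.w_nonneg u v,
      ← ENNReal.ofReal_add (sub_nonneg.2 (net.w_sum_le_one v))
        (Finset.sum_nonneg fun u _ => net.w_nonneg u v), sub_add_cancel, ENNReal.ofReal_one]⟩

theorem sum_realWeight_mul_ite (P : (V → Option V) → Prop) [DecidablePred P] :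
    ∑ g, net.realWeight g * (if P g then 1 else 0) =
      (Measure.pi net.selectMeasure {g | P g}).toReal := by
  simp_rw [mul_ite, mul_one, mul_zero]
  rw [← Finset.sum_filter, ← Finset.coe_filter_univ, ← sum_measure_singleton,
    ENNReal.toReal_sum fun g _ => measure_ne_top (Measure.pi net.selectMeasure) {g}]
  refine Finset.sum_congr rfl fun g _ => ?_
  rw [Measure.pi_singleton]
  simp_rw [selectMeasure_singleton]
  rw [← ENNReal.ofReal_prod_of_nonneg fun v _ => net.selectProb_nonneg v (g v),
    ENNReal.toReal_ofReal (Finset.prod_nonneg fun v _ => net.selectProb_nonneg v (g v))]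
  rfl

theorem f_eq_measure_pi_selectMeasure (I : Finset V) :
    net.f I = (Measure.pi net.selectMeasure {g | net.t ∈ net.Hinf g I}).toReal := by
  simp only [f, Cinf, Hinf, Cstep_eq_spreadStep, Hstep_eq_spreadStep]
  congr 1
  exact net.isSpreadRule_thresholdRule.measure_iterate_spreadStep_eq isSpreadRule_choiceRule
    (fun _ => volume.restrict (Set.Icc 0 1)) net.selectMeasure
    (fun u C => (volume_restrict_Icc_setOf_le (net.sum_w_le_one C u)).trans
      (net.selectMeasure_choiceRule u C).symm) _ _ (net.t ∈ ·)

theorem t_notMem_Nbr_s : net.t ∉ net.Nbr net.s := by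
  simpa [Nbr] using fun h => net.t_not_friend h.symm

end FriendNet

open FriendNet

theorem subset_traceAux {α : Type} [DecidableEq α] (g : α → Option α) (Ns : Finset α) :
    ∀ (f : ℕ) (u : α) (acc : Finset (Option α)), acc ⊆ traceAux g Ns f u acc
  | 0, _, _ => subset_rfl
  | f + 1, u, acc => by
    unfold traceAux
    split
    · exact Finset.subset_insert _ _
    · split_ifs
      · exact Finset.subset_insert _ _
      · exact subset_rfl
      · exact (Finset.subset_insert _ _).trans (subset_traceAux g Ns f _ _)

theorem card_le_of_subset_image_some {I : Finset V} {acc : Finset (Option V)}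
    (h : acc ⊆ I.image some) : acc.card ≤ Fintype.card V :=
  (Finset.card_le_card h).trans (Finset.card_image_le.trans (Finset.card_le_univ I))

/-- Each step of a successful trace adds a fresh invited user to the accumulator, which bounds the
length of the chain it follows into `Ns`. -/
theorem exists_mem_iterate_Hstep_of_traceAux_subset (g : V → Option V) (Ns I : Finset V) :
    ∀ (f : ℕ) (u : V) (acc : Finset (Option V)), traceAux g Ns f u acc ⊆ I.image some →
      Fintype.card V + 2 ≤ f + acc.card → u ∈ I →
      ∃ n, u ∈ (Hstep g I)^[n] Ns ∧ n + acc.card ≤ Fintype.card V + 1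
  | 0, _, acc, hsub, hfuel, _ => by
    have := card_le_of_subset_image_some (I := I) (acc := acc) hsub
    omega
  | f + 1, u, acc, hsub, hfuel, hu => by
    have hacc := card_le_of_subset_image_some ((subset_traceAux g Ns _ u acc).trans hsub)
    unfold traceAux at hsub
    split at hsub
    · simpa using hsub (Finset.mem_insert_self _ _)
    · rename_i v hgu
      split_ifs at hsub with hv hvN
      · simpa using hsub (Finset.mem_insert_self _ _)
      · exact ⟨1, mem_iterate_Hstep_succ (n := 0) hu hvN hgu, by omega⟩
      · have hcard := Finset.card_insert_of_notMem hv
        have hvI : v ∈ I := by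
          simpa using hsub (subset_traceAux g Ns f v _ (Finset.mem_insert_self _ _))
        obtain ⟨n, hn, hbound⟩ :=
          exists_mem_iterate_Hstep_of_traceAux_subset g Ns I f v _ hsub (by omega) hvI
        exact ⟨n + 1, mem_iterate_Hstep_succ hu hn hgu, by omega⟩

/-- Users entering Process 2 in round `n + 1` point to users entering in round `n`, so the trace
only visits users of strictly decreasing entry rounds and never revisits its accumulator. -/
theorem traceAux_subset_of_mem_iterate_Hstep (g : V → Option V) (Ns I : Finset V) :
    ∀ (n f : ℕ) (u : V) (acc : Finset (Option V)), n < f →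
      u ∈ (Hstep g I)^[n + 1] Ns → u ∉ (Hstep g I)^[n] Ns → acc ⊆ I.image some →
      (∀ x, some x ∈ acc → x ∉ (Hstep g I)^[n] Ns) → traceAux g Ns f u acc ⊆ I.image some
  | _, 0, _, _, hf, _, _, _, _ => absurd hf (Nat.not_lt_zero _)
  | n, f + 1, u, acc, hf, hu, hun, hacc, hfresh => by
    obtain ⟨huI, v, hv, hgu⟩ := exists_of_mem_iterate_Hstep_succ hu hun
    have hvacc : some v ∉ acc := fun h => hfresh v h hv
    simp only [traceAux, hgu, if_neg hvacc]
    split_ifs with hvN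
    · exact hacc
    obtain ⟨m, rfl⟩ : ∃ m, n = m + 1 :=
      Nat.exists_eq_succ_of_ne_zero fun h => hvN (by simpa [h] using hv)
    have hvm : v ∉ (Hstep g I)^[m] Ns := fun h => hun (mem_iterate_Hstep_succ huI h hgu)
    have hvI : v ∈ I := (exists_of_mem_iterate_Hstep_succ hv hvm).1
    refine traceAux_subset_of_mem_iterate_Hstep g Ns I m f v _ (by omega) hv hvm
      (Finset.insert_subset (Finset.mem_image_of_mem _ hvI) hacc) fun x hx => ?_
    rcases Finset.mem_insert.1 hx with hx | hx
    · exact Option.some_injective _ hx ▸ hvm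
    · exact fun h => hfresh x hx (monotone_iterate_Hstep g I Ns m.le_succ h)

theorem traceAux_subset_iff_mem_iterate_Hstep (g : V → Option V) {Ns I : Finset V} {t : V}
    (ht : t ∉ Ns) :
    traceAux g Ns (Fintype.card V + 1) t {some t} ⊆ I.image some ↔
      t ∈ (Hstep g I)^[Fintype.card V] Ns := by
  constructor
  · intro h
    have htI : t ∈ I := by simpa using h (subset_traceAux g Ns _ t _ (Finset.mem_singleton_self _))
    obtain ⟨n, hn, hbound⟩ :=
      exists_mem_iterate_Hstep_of_traceAux_subset g Ns I _ t _ h (by simp) htI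
    exact monotone_iterate_Hstep g I Ns (by simpa using hbound) hn
  · intro h
    classical
    have hex : ∃ n, t ∈ (Hstep g I)^[n] Ns := ⟨_, h⟩
    obtain ⟨m, hm⟩ : ∃ m, Nat.find hex = m + 1 :=
      Nat.exists_eq_succ_of_ne_zero fun h0 => ht (by simpa [h0] using Nat.find_spec hex)
    have htm : t ∉ (Hstep g I)^[m] Ns := Nat.find_min hex (by omega)
    have htm1 : t ∈ (Hstep g I)^[m + 1] Ns := hm ▸ Nat.find_spec hex
    have hmK : m < Fintype.card V + 1 := by
      have := Nat.find_min' hex h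
      omega
    exact traceAux_subset_of_mem_iterate_Hstep g Ns I m _ t _ hmK htm1 htm
      (by simpa using (exists_of_mem_iterate_Hstep_succ htm1 htm).1) (by simpa using htm)

/-- Corollary 1: the acceptance probability admits the explicit formula
`f(I) = Σ_{g ∈ 𝒢} Pr[g] · f(g, I)` where `f(g, I) = 1` if `t(g) ⊆ I` and `0` otherwise. -/
theorem acceptance_prob_explicit_formula (net : FriendNet V) (I : Finset V) :
    net.f I = ∑ g : V → Option V, net.realWeight g * net.fg g I := by
  simp only [fg, trace, traceAux_subset_iff_mem_iterate_Hstep _ net.t_notMem_Nbr_s]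
  rw [f_eq_measure_pi_selectMeasure, sum_realWeight_mul_ite]
  rfl
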